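/- Let r, s be real with 0 < s, 2s < r, and r + 5s/3 < 1, and suppose 2/3 + s ≤ r. Set q₁ = (2(r − s) − 1, r − s), q₂ = (1 − r + s, r − s), q₃ = (1 − r + s, 2(1 − r + s)). Then q₁ and q₂ lie in the closed region D3 = {(x₁, x₂) : s ≤ x₁ ≤ r − s, r − s ≤ x₂ ≤ r}, q₃ lies in the closed region D1 = {(x₁, x₂) : 0 ≤ x₁ ≤ x₂ ≤ r − s}, and F₃(q₁) = q₂, F₃(q₂) = q₃, F₁(q₃) = q₁; i.e. (q₁, q₂, q₃) is a period-3 orbit with symbolic code 3 → 3 → 1. -/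

import Mathlib

/-!
Everything depends on `u = r - s` only: the orbit is `(2u - 1, u) ↦ (1 - u, u) ↦ (1 - u, 2(1 - u))`,
the three map identities are affine identities in `u`, and membership in the regions amounts to
`2/3 ≤ u`, `u + s ≤ 1` and `s ≤ 2u - 1`. The hypotheses give the first two directly, and the last
because together they force `s < 1/8`, so that `2u - 1 ≥ 1/3 > s`.
-/

/-- The affine branch of the return-time map on region 3. -/
noncomputable def F3 (r s : ℝ) (p : ℝ × ℝ) : ℝ × ℝ :=
  (1 - 4*p.2/3 + (r - s)/3, 1 - 4*p.2/3 + p.1 + (r - s)/3)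

/-- The affine branch of the return-time map on region 1. -/
noncomputable def F1 (p : ℝ × ℝ) : ℝ × ℝ :=
  (1 - p.2, 1 - p.2 + p.1)

/-- The closed region D3. -/
def D3 (r s : ℝ) : Set (ℝ × ℝ) :=
  {p | s ≤ p.1 ∧ p.1 ≤ r - s ∧ r - s ≤ p.2 ∧ p.2 ≤ r}

/-- The closed region D1. -/
def D1 (r s : ℝ) : Set (ℝ × ℝ) :=
  {p | 0 ≤ p.1 ∧ p.1 ≤ p.2 ∧ p.2 ≤ r - s}

section Orbit

variable (r s : ℝ)

theorem F3_two_mul_sub_one : F3 r s (2*(r - s) - 1, r - s) = (1 - r + s, r - s) := by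
  simp only [F3, Prod.mk.injEq]
  constructor <;> ring

theorem F3_one_sub : F3 r s (1 - r + s, r - s) = (1 - r + s, 2*(1 - r + s)) := by
  simp only [F3, Prod.mk.injEq]
  constructor <;> ring

theorem F1_one_sub : F1 (1 - r + s, 2*(1 - r + s)) = (2*(r - s) - 1, r - s) := by
  simp only [F1, Prod.mk.injEq]
  constructor <;> ring

variable {r s}

theorem two_mul_sub_one_mem_D3 (hs : 0 ≤ s) (hs_le : s ≤ 2*(r - s) - 1) (hr : r - s ≤ 1) :
    (2*(r - s) - 1, r - s) ∈ D3 r s :=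
  ⟨hs_le, by linarith, le_rfl, by linarith⟩

theorem one_sub_mem_D3 (hs : 0 ≤ s) (hr : r ≤ 1) (hu : 1 ≤ 2*(r - s)) :
    (1 - r + s, r - s) ∈ D3 r s :=
  ⟨by linarith, by linarith, le_rfl, by linarith⟩

theorem one_sub_mem_D1 (hr : r - s ≤ 1) (hu : 2 ≤ 3*(r - s)) :
    (1 - r + s, 2*(1 - r + s)) ∈ D1 r s :=
  ⟨by linarith, by linarith, by linarith⟩

end Orbit

theorem period3_orbit_331_general (r s : ℝ) (hs : 0 < s)
    (h1 : r + 5*s/3 < 1) (hlo : 2/3 + s ≤ r) :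
    (2*(r - s) - 1, r - s) ∈ D3 r s ∧
    (1 - r + s, r - s) ∈ D3 r s ∧
    (1 - r + s, 2*(1 - r + s)) ∈ D1 r s ∧
    F3 r s (2*(r - s) - 1, r - s) = (1 - r + s, r - s) ∧
    F3 r s (1 - r + s, r - s) = (1 - r + s, 2*(1 - r + s)) ∧
    F1 (1 - r + s, 2*(1 - r + s)) = (2*(r - s) - 1, r - s) := by
  have hs_small : s < 1/8 := by linarith
  have hr : r ≤ 1 := by linarith
  refine ⟨two_mul_sub_one_mem_D3 hs.le (by linarith) (by linarith),
    one_sub_mem_D3 hs.le hr (by linarith), one_sub_mem_D1 (by linarith) (by linarith),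
    F3_two_mul_sub_one r s, F3_one_sub r s, F1_one_sub r s⟩

theorem period3_orbit_331 (r s : ℝ) (hs : 0 < s) (hrs : 2*s < r)
    (h1 : r + 5*s/3 < 1) (hlo : 2/3 + s ≤ r) :
    (2*(r - s) - 1, r - s) ∈ D3 r s ∧
    (1 - r + s, r - s) ∈ D3 r s ∧
    (1 - r + s, 2*(1 - r + s)) ∈ D1 r s ∧
    F3 r s (2*(r - s) - 1, r - s) = (1 - r + s, r - s) ∧
    F3 r s (1 - r + s, r - s) = (1 - r + s, 2*(1 - r + s)) ∧
    F1 (1 - r + s, 2*(1 - r + s)) = (2*(r - s) - 1, r - s) :=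
  period3_orbit_331_general r s hs h1 hlo
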